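/- Let U ⊆ ℝ² be a nonempty open set and suppose the smooth symmetric Christoffel map Γ is of pure projective form: there is a smooth 1-form Υ : U → (ℝ² →ₗ[ℝ] ℝ) with Γ_{ab}{}^c = δ_a{}^cΥ_b + δ_b{}^cΥ_a (so that the unparameterised geodesics of Γ are straight line segments in U). If the Ricci tensor R_{ab} of Γ is symmetric, then Y_{abc} := ∇_aR_{bc} − ∇_bR_{ac} vanishes identically on U. -/

import Mathlib

noncomputable section

/-- The plane ℝ², as `Fin 2 → ℝ`. -/
abbrev E2 : Type := Fin 2 → ℝ

/-- The standard basis vectors of ℝ². -/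
def bas (a : Fin 2) : E2 := Pi.single a 1

/-- Partial derivative ∂ₐ of a scalar function on ℝ². -/
def pd (a : Fin 2) (f : E2 → ℝ) (x : E2) : ℝ := fderiv ℝ f x (bas a)

/-- Components Γ_{ab}{}^c of a Christoffel map Γ : ℝ² → (ℝ² →ₗ ℝ² →ₗ ℝ²). -/
def chr (Γ : E2 → (E2 →ₗ[ℝ] E2 →ₗ[ℝ] E2)) (a b c : Fin 2) (x : E2) : ℝ :=
  Γ x (bas a) (bas b) c

/-- Ricci tensor components built from Christoffel components `Γc a b c` (= Γ_{ab}{}^c):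
`R_{ad} = ∂_cΓ_{ad}{}^c − ∂_aΓ_{cd}{}^c + Γ_{cb}{}^cΓ_{ad}{}^b − Γ_{ab}{}^cΓ_{cd}{}^b`. -/
def ricciC (Γc : Fin 2 → Fin 2 → Fin 2 → E2 → ℝ) (a d : Fin 2) (x : E2) : ℝ :=
  (∑ c, pd c (Γc a d c) x) - (∑ c, pd a (Γc c d c) x)
  + (∑ b, ∑ c, Γc c b c x * Γc a d b x)
  - (∑ b, ∑ c, Γc a b c x * Γc c d b x)

/-- Covariant derivative of the Ricci tensor:
`∇_aR_{bc} = ∂_aR_{bc} − Γ_{ab}{}^dR_{dc} − Γ_{ac}{}^dR_{bd}`. -/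
def covRicciC (Γc : Fin 2 → Fin 2 → Fin 2 → E2 → ℝ) (a b c : Fin 2) (x : E2) : ℝ :=
  pd a (ricciC Γc b c) x - (∑ d, Γc a b d x * ricciC Γc d c x)
    - (∑ d, Γc a c d x * ricciC Γc b d x)

/-- `Y_{abc} = ∇_aR_{bc} − ∇_bR_{ac}`. -/
def YC (Γc : Fin 2 → Fin 2 → Fin 2 → E2 → ℝ) (a b c : Fin 2) (x : E2) : ℝ :=
  covRicciC Γc a b c x - covRicciC Γc b a c x

/-! ### Auxiliary material -/


lemma pd_congr {f g : E2 → ℝ} {x : E2} (h : f =ᶠ[nhds x] g) (a : Fin 2) :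
    pd a f x = pd a g x := by
  unfold pd; rw [h.fderiv_eq]

lemma pd_add {f g : E2 → ℝ} {x : E2} (hf : DifferentiableAt ℝ f x)
    (hg : DifferentiableAt ℝ g x) (a : Fin 2) :
    pd a (fun y => f y + g y) x = pd a f x + pd a g x := by
  simp [pd, fderiv_fun_add hf hg]

lemma pd_mul {f g : E2 → ℝ} {x : E2} (hf : DifferentiableAt ℝ f x)
    (hg : DifferentiableAt ℝ g x) (a : Fin 2) :
    pd a (fun y => f y * g y) x = pd a f x * g x + f x * pd a g x := by
  simp [pd, fderiv_fun_mul hf hg]; ring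

lemma pd_sub {f g : E2 → ℝ} {x : E2} (hf : DifferentiableAt ℝ f x)
    (hg : DifferentiableAt ℝ g x) (a : Fin 2) :
    pd a (fun y => f y - g y) x = pd a f x - pd a g x := by
  simp [pd, fderiv_fun_sub hf hg]

lemma diffAt_of_contDiffOn {f : E2 → ℝ} {U : Set E2} (hUo : IsOpen U)
    (hf : ContDiffOn ℝ (⊤ : ℕ∞) f U) {x : E2} (hx : x ∈ U) : DifferentiableAt ℝ f x :=
  ((hf x hx).differentiableWithinAt (by simp)).differentiableAt (hUo.mem_nhds hx)

lemma pd_contDiffOn {f : E2 → ℝ} {U : Set E2} (hUo : IsOpen U)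
    (hf : ContDiffOn ℝ (⊤ : ℕ∞) f U) (b : Fin 2) : ContDiffOn ℝ (⊤ : ℕ∞) (pd b f) U := by
  have h1 : ContDiffOn ℝ (⊤ : ℕ∞) (fderiv ℝ f) U := hf.fderiv_of_isOpen hUo (by simp)
  exact h1.clm_apply contDiffOn_const

lemma pd_comm {f : E2 → ℝ} {U : Set E2} (hUo : IsOpen U)
    (hf : ContDiffOn ℝ (⊤ : ℕ∞) f U) {x : E2} (hx : x ∈ U) (a b : Fin 2) :
    pd a (pd b f) x = pd b (pd a f) x := by
  have hCA : ContDiffAt ℝ (⊤ : ℕ∞) f x := (hf x hx).contDiffAt (hUo.mem_nhds hx)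
  have hsym : IsSymmSndFDerivAt ℝ f x := hCA.isSymmSndFDerivAt (by rw [minSmoothness_of_isRCLikeNormedField]; exact WithTop.coe_le_coe.mpr le_top)
  have hD : DifferentiableAt ℝ (fderiv ℝ f) x :=
    ((hCA.fderiv_right (m := 1) (WithTop.coe_le_coe.mpr le_top)).differentiableAt one_ne_zero)
  have key : ∀ u v : Fin 2, pd u (pd v f) x = fderiv ℝ (fderiv ℝ f) x (bas u) (bas v) := by
    intro u v
    unfold pd
    rw [fderiv_clm_apply hD (differentiableAt_const _)]
    simp
  rw [key, key, hsym.eq]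

lemma pd_ite (P : Prop) [Decidable P] (f : E2 → ℝ) (a : Fin 2) (x : E2) :
    pd a (fun y => if P then f y else 0) x = if P then pd a f x else 0 := by
  split <;> simp [pd]

lemma diffAt_ite (P : Prop) [Decidable P] {f : E2 → ℝ} {x : E2}
    (hf : DifferentiableAt ℝ f x) :
    DifferentiableAt ℝ (fun y => if P then f y else 0) x := by
  split
  · exact hf
  · exact differentiableAt_const 0

/-- The 1-form components. -/
def ff (Υ : E2 → (E2 →ₗ[ℝ] ℝ)) (a : Fin 2) (x : E2) : ℝ := Υ x (bas a)

/-- The projective-form Christoffel components. -/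
def GG (Υ : E2 → (E2 →ₗ[ℝ] ℝ)) (a b c : Fin 2) (x : E2) : ℝ :=
  (if c = b then ff Υ a x else 0) + (if c = a then ff Υ b x else 0)

section Aux

variable {U : Set E2} {Υ : E2 → (E2 →ₗ[ℝ] ℝ)}

lemma pd_GG (hUo : IsOpen U) (hΥs : ∀ a : Fin 2, ContDiffOn ℝ (⊤ : ℕ∞) (ff Υ a) U)
    {x : E2} (hx : x ∈ U) (e i j k : Fin 2) :
    pd e (GG Υ i j k) x
      = (if k = j then pd e (ff Υ i) x else 0) + (if k = i then pd e (ff Υ j) x else 0) := by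
  have h1 : DifferentiableAt ℝ (fun y => if k = j then ff Υ i y else 0) x :=
    diffAt_ite _ (diffAt_of_contDiffOn hUo (hΥs i) hx)
  have h2 : DifferentiableAt ℝ (fun y => if k = i then ff Υ j y else 0) x :=
    diffAt_ite _ (diffAt_of_contDiffOn hUo (hΥs j) hx)
  have hG : GG Υ i j k = fun y =>
      (fun y => if k = j then ff Υ i y else 0) y + (fun y => if k = i then ff Υ j y else 0) y :=
    rfl
  rw [hG, pd_add h1 h2, pd_ite, pd_ite]

lemma ricci_GG (hUo : IsOpen U) (hΥs : ∀ a : Fin 2, ContDiffOn ℝ (⊤ : ℕ∞) (ff Υ a) U)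
    {x : E2} (hx : x ∈ U) (a d : Fin 2) :
    ricciC (GG Υ) a d x
      = ff Υ a x * ff Υ d x + pd d (ff Υ a) x - 2 * pd a (ff Υ d) x := by
  have hpd := pd_GG hUo hΥs hx
  unfold ricciC
  simp only [hpd, GG, Fin.sum_univ_two]
  fin_cases a <;> fin_cases d <;> norm_num <;> ring

/-- Equality of Christoffel components on `U` transfers to Ricci. -/
lemma ricci_congr {Γ1 Γ2 : Fin 2 → Fin 2 → Fin 2 → E2 → ℝ} (hUo : IsOpen U)
    (h : ∀ y ∈ U, ∀ i j k, Γ1 i j k y = Γ2 i j k y) {x : E2} (hx : x ∈ U) (a d : Fin 2) :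
    ricciC Γ1 a d x = ricciC Γ2 a d x := by
  have hp : ∀ (e i j k : Fin 2), pd e (Γ1 i j k) x = pd e (Γ2 i j k) x := by
    intro e i j k
    exact pd_congr (by filter_upwards [hUo.mem_nhds hx] with y hy using h y hy i j k) e
  have hv : ∀ i j k, Γ1 i j k x = Γ2 i j k x := h x hx
  unfold ricciC
  simp only [hp, hv]

lemma YC_congr {Γ1 Γ2 : Fin 2 → Fin 2 → Fin 2 → E2 → ℝ} (hUo : IsOpen U)
    (h : ∀ y ∈ U, ∀ i j k, Γ1 i j k y = Γ2 i j k y) {x : E2} (hx : x ∈ U) (a b c : Fin 2) :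
    YC Γ1 a b c x = YC Γ2 a b c x := by
  have hcov : ∀ i j k, covRicciC Γ1 i j k x = covRicciC Γ2 i j k x := by
    intro i j k
    have hv : ∀ i j k, Γ1 i j k x = Γ2 i j k x := h x hx
    have hr : ∀ i j, ricciC Γ1 i j x = ricciC Γ2 i j x := fun i j =>
      ricci_congr hUo h hx i j
    have hpr : ∀ (e i j : Fin 2), pd e (ricciC Γ1 i j) x = pd e (ricciC Γ2 i j) x := by
      intro e i j
      exact pd_congr
        (by filter_upwards [hUo.mem_nhds hx] with y hy using ricci_congr hUo h hy i j) e
    unfold covRicciC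
    simp only [hpr, hv, hr]
  unfold YC
  rw [hcov, hcov]

/-- Main computation:  with closedness of `Υ` on `U`, the tensor `Y` of `GG Υ` vanishes. -/
lemma Y_GG (hUo : IsOpen U) (hΥs : ∀ a : Fin 2, ContDiffOn ℝ (⊤ : ℕ∞) (ff Υ a) U)
    (hcl : ∀ y ∈ U, ∀ a b : Fin 2, pd a (ff Υ b) y = pd b (ff Υ a) y)
    {x : E2} (hx : x ∈ U) (a b c : Fin 2) :
    YC (GG Υ) a b c x = 0 := by
  have hdiff : ∀ (i : Fin 2) (y : E2), y ∈ U → DifferentiableAt ℝ (ff Υ i) y := fun i y hy =>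
    diffAt_of_contDiffOn hUo (hΥs i) hy
  have hpdf : ∀ i j : Fin 2, ContDiffOn ℝ (⊤ : ℕ∞) (pd j (ff Υ i)) U := fun i j =>
    pd_contDiffOn hUo (hΥs i) j
  -- simplified Ricci on U
  have hRloc : ∀ y ∈ U, ∀ i j : Fin 2,
      ricciC (GG Υ) i j y = ff Υ i y * ff Υ j y - pd i (ff Υ j) y := by
    intro y hy i j
    rw [ricci_GG hUo hΥs hy, hcl y hy j i]
    ring
  have hR : ∀ i j : Fin 2, ricciC (GG Υ) i j x = ff Υ i x * ff Υ j x - pd i (ff Υ j) x :=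
    hRloc x hx
  -- derivative of Ricci
  have hP : ∀ i j k : Fin 2, pd i (ricciC (GG Υ) j k) x
      = pd i (ff Υ j) x * ff Υ k x + ff Υ j x * pd i (ff Υ k) x - pd i (pd j (ff Υ k)) x := by
    intro i j k
    have he : ricciC (GG Υ) j k =ᶠ[nhds x]
        fun y => (fun y => ff Υ j y * ff Υ k y) y - (fun y => pd j (ff Υ k) y) y := by
      filter_upwards [hUo.mem_nhds hx] with y hy using hRloc y hy j k
    rw [pd_congr he, pd_sub (f := fun y => ff Υ j y * ff Υ k y) ((hdiff j x hx).mul (hdiff k x hx))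
        (diffAt_of_contDiffOn hUo (hpdf k j) hx),
      pd_mul (hdiff j x hx) (hdiff k x hx)]
  have hclx : ∀ i j : Fin 2, pd i (ff Υ j) x = pd j (ff Υ i) x := hcl x hx
  have hcom : ∀ i j k : Fin 2, pd i (pd j (ff Υ k)) x = pd j (pd i (ff Υ k)) x := by
    intro i j k
    exact pd_comm hUo (hΥs k) hx i j
  unfold YC covRicciC
  rw [hP a b c, hP b a c]
  simp only [hR, Fin.sum_univ_two, GG]
  fin_cases a <;> fin_cases b <;> fin_cases c <;>
    norm_num <;>
    (try rw [hclx 1 0]) <;> (try rw [hcom 1 0]) <;> ring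

end Aux

/-- if a smooth symmetric Christoffel map is of pure projective form
`Γₓ u v = Υₓ(u) • v + Υₓ(v) • u` (i.e. `Γ_{ab}{}^c = δ_a{}^cΥ_b + δ_b{}^cΥ_a`) and its Ricci
tensor is symmetric, then `Y_{abc} = ∇_aR_{bc} − ∇_bR_{ac}` vanishes identically. -/
theorem stmt_7 (U : Set E2) (hUo : IsOpen U) (hUne : U.Nonempty)
    (Γ : E2 → (E2 →ₗ[ℝ] E2 →ₗ[ℝ] E2)) (Υ : E2 → (E2 →ₗ[ℝ] ℝ))
    (hΓs : ∀ a b c : Fin 2, ContDiffOn ℝ (⊤ : ℕ∞) (chr Γ a b c) U)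
    (hsym : ∀ x ∈ U, ∀ u v : E2, Γ x u v = Γ x v u)
    (hΥs : ∀ a : Fin 2, ContDiffOn ℝ (⊤ : ℕ∞) (fun x => Υ x (bas a)) U)
    (hproj : ∀ x ∈ U, ∀ u v : E2, Γ x u v = Υ x u • v + Υ x v • u)
    (hRsym : ∀ x ∈ U, ∀ a b : Fin 2, ricciC (chr Γ) a b x = ricciC (chr Γ) b a x) :
    ∀ x ∈ U, ∀ a b c : Fin 2, YC (chr Γ) a b c x = 0 := by
  have hΥs' : ∀ a : Fin 2, ContDiffOn ℝ (⊤ : ℕ∞) (ff Υ a) U := hΥs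
  have hEq : ∀ y ∈ U, ∀ i j k : Fin 2, chr Γ i j k y = GG Υ i j k y := by
    intro y hy i j k
    unfold chr
    rw [hproj y hy]
    simp [GG, ff, bas, Pi.single_apply]
  -- closedness of Υ on U
  have hcl : ∀ y ∈ U, ∀ a b : Fin 2, pd a (ff Υ b) y = pd b (ff Υ a) y := by
    intro y hy a b
    have h1 : ricciC (GG Υ) a b y = ricciC (GG Υ) b a y := by
      rw [← ricci_congr hUo hEq hy a b, ← ricci_congr hUo hEq hy b a]
      exact hRsym y hy a b
    rw [ricci_GG hUo hΥs' hy a b, ricci_GG hUo hΥs' hy b a] at h1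
    linarith
  intro x hx a b c
  rw [YC_congr hUo hEq hx a b c]
  exact Y_GG hUo hΥs' hcl hx a b c
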